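/- Consider the 7-dimensional ω = 0 OSN system with strictly positive parameters, and suppose R₀ := βΛ/(μ μ_n) > 1, so the equilibrium gOSN = (x̂₁, Û, 0, 0, 0, 0, 0) with x̂₁ := μ_n/β, Û := Λ/μ_n − μ/β lies in the nonnegative orthant with Û > 0. Define R_j(U) := β_j U/(μ_j(1 + α_j U)) for j = 1, 2. Then the Jacobian of the vector field at gOSN is Hurwitz (all complex eigenvalues have strictly negative real part) if and only if the three inequalities R₀ < 1 + β/β_w, R₁(Û) < 1, and R₂(Û) < 1 all hold; if any of the reversed strict inequalities holds, the Jacobian at gOSN has an eigenvalue with strictly positive real part. -/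

import Mathlib

open Matrix Polynomial

noncomputable section

/-- The ω = 0 OSN rumor-spreading vector field on ℝ^7, in coordinates
`(x₁, U, W, S₁, B₁, S₂, B₂)` (indices 0,…,6). -/
def osnField (Λ μ μn β βw β₁ β₂ γ₁ γ₂ μ₁ μ₂ α₁ α₂ ε₁ ε₂ : ℝ)
    (p : Fin 7 → ℝ) : Fin 7 → ℝ :=
  ![Λ - μ * p 0 - β * p 0 * p 1,
    p 1 * (β * p 0 - μn - βw * p 2),
    βw * p 1 * p 2 - μ * p 2,
    β₁ * p 4 * p 1 / (ε₁ * p 4 + α₁ * p 1 + 1) - γ₁ * p 3,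
    γ₁ * p 3 - μ₁ * p 4,
    β₂ * p 6 * p 1 / (ε₂ * p 6 + α₂ * p 1 + 1) - γ₂ * p 5,
    γ₂ * p 5 - μ₂ * p 6]

/-- The Jacobian matrix of a vector field on ℝ^7, entry `(i, j)` being
`∂f_i/∂x_j` computed via the Fréchet derivative. -/
def jacobian7 (f : (Fin 7 → ℝ) → Fin 7 → ℝ) (x : Fin 7 → ℝ) :
    Matrix (Fin 7) (Fin 7) ℝ :=
  fun i j => fderiv ℝ (fun p => f p i) x (Pi.single j 1)

/-- `μ : ℂ` is an eigenvalue of the real matrix `A`, i.e. a complex root of its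
characteristic polynomial. -/
def Matrix.IsEigenvalueR {n : ℕ} (A : Matrix (Fin n) (Fin n) ℝ) (μ : ℂ) : Prop :=
  ((A.map (Complex.ofReal)).charpoly).IsRoot μ

/-- A real matrix is Hurwitz if every complex eigenvalue has strictly negative
real part. -/
def Matrix.IsHurwitz {n : ℕ} (A : Matrix (Fin n) (Fin n) ℝ) : Prop :=
  ∀ μ : ℂ, A.IsEigenvalueR μ → μ.re < 0


@[simp] lemma osn_cv2_1 {α : Type*} (x : α) (u : Fin 1 → α) :
    Matrix.vecCons x u (1 : Fin 2) = u 0 := rfl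
@[simp] lemma osn_cv3_1 {α : Type*} (x : α) (u : Fin 2 → α) :
    Matrix.vecCons x u (1 : Fin 3) = u 0 := rfl
@[simp] lemma osn_cv3_2 {α : Type*} (x : α) (u : Fin 2 → α) :
    Matrix.vecCons x u (2 : Fin 3) = u 1 := rfl
@[simp] lemma osn_cv4_1 {α : Type*} (x : α) (u : Fin 3 → α) :
    Matrix.vecCons x u (1 : Fin 4) = u 0 := rfl
@[simp] lemma osn_cv4_2 {α : Type*} (x : α) (u : Fin 3 → α) :
    Matrix.vecCons x u (2 : Fin 4) = u 1 := rfl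
@[simp] lemma osn_cv4_3 {α : Type*} (x : α) (u : Fin 3 → α) :
    Matrix.vecCons x u (3 : Fin 4) = u 2 := rfl
@[simp] lemma osn_cv5_1 {α : Type*} (x : α) (u : Fin 4 → α) :
    Matrix.vecCons x u (1 : Fin 5) = u 0 := rfl
@[simp] lemma osn_cv5_2 {α : Type*} (x : α) (u : Fin 4 → α) :
    Matrix.vecCons x u (2 : Fin 5) = u 1 := rfl
@[simp] lemma osn_cv5_3 {α : Type*} (x : α) (u : Fin 4 → α) :
    Matrix.vecCons x u (3 : Fin 5) = u 2 := rfl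
@[simp] lemma osn_cv5_4 {α : Type*} (x : α) (u : Fin 4 → α) :
    Matrix.vecCons x u (4 : Fin 5) = u 3 := rfl
@[simp] lemma osn_cv6_1 {α : Type*} (x : α) (u : Fin 5 → α) :
    Matrix.vecCons x u (1 : Fin 6) = u 0 := rfl
@[simp] lemma osn_cv6_2 {α : Type*} (x : α) (u : Fin 5 → α) :
    Matrix.vecCons x u (2 : Fin 6) = u 1 := rfl
@[simp] lemma osn_cv6_3 {α : Type*} (x : α) (u : Fin 5 → α) :
    Matrix.vecCons x u (3 : Fin 6) = u 2 := rfl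
@[simp] lemma osn_cv6_4 {α : Type*} (x : α) (u : Fin 5 → α) :
    Matrix.vecCons x u (4 : Fin 6) = u 3 := rfl
@[simp] lemma osn_cv6_5 {α : Type*} (x : α) (u : Fin 5 → α) :
    Matrix.vecCons x u (5 : Fin 6) = u 4 := rfl
@[simp] lemma osn_cv7_1 {α : Type*} (x : α) (u : Fin 6 → α) :
    Matrix.vecCons x u (1 : Fin 7) = u 0 := rfl
@[simp] lemma osn_cv7_2 {α : Type*} (x : α) (u : Fin 6 → α) :
    Matrix.vecCons x u (2 : Fin 7) = u 1 := rfl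
@[simp] lemma osn_cv7_3 {α : Type*} (x : α) (u : Fin 6 → α) :
    Matrix.vecCons x u (3 : Fin 7) = u 2 := rfl
@[simp] lemma osn_cv7_4 {α : Type*} (x : α) (u : Fin 6 → α) :
    Matrix.vecCons x u (4 : Fin 7) = u 3 := rfl
@[simp] lemma osn_cv7_5 {α : Type*} (x : α) (u : Fin 6 → α) :
    Matrix.vecCons x u (5 : Fin 7) = u 4 := rfl
@[simp] lemma osn_cv7_6 {α : Type*} (x : α) (u : Fin 6 → α) :
    Matrix.vecCons x u (6 : Fin 7) = u 5 := rfl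

lemma osn_quad_root_neg (b c : ℝ) (hb : 0 < b) (hc : 0 < c) (z : ℂ)
    (h : z^2 + b*z + c = 0) : z.re < 0 := by
  have hre : z.re^2 - z.im^2 + b*z.re + c = 0 := by
    have := congrArg Complex.re h
    simpa [pow_two, Complex.mul_re, Complex.add_re, Complex.ofReal_re,
      Complex.ofReal_im] using this
  have him : 2*z.re*z.im + b*z.im = 0 := by
    have := congrArg Complex.im h
    simp [pow_two, Complex.mul_im, Complex.add_im] at this
    linarith
  by_contra hx
  push_neg at hx
  have h4 : 2*z.re*z.im^2 + b*z.im^2 = 0 := by linear_combination z.im * him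
  have h5 : z.im^2 = 0 := by nlinarith [sq_nonneg z.im, mul_nonneg hx (sq_nonneg z.im)]
  nlinarith [sq_nonneg z.re, mul_nonneg hx hx]

lemma osn_quad_root_nonneg (b c : ℝ) (hc : c ≤ 0) :
    ∃ x : ℝ, 0 ≤ x ∧ (c < 0 → 0 < x) ∧ x^2 + b*x + c = 0 := by
  have hs : Real.sqrt (b^2 - 4*c)^2 = b^2 - 4*c := Real.sq_sqrt (by nlinarith)
  have hs0 : 0 ≤ Real.sqrt (b^2-4*c) := Real.sqrt_nonneg _
  have hbs : b ≤ Real.sqrt (b^2 - 4*c) := by nlinarith [hs, hs0]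
  refine ⟨(-b + Real.sqrt (b^2 - 4*c))/2, by linarith, ?_, ?_⟩
  · intro hc'
    have : b < Real.sqrt (b^2-4*c) := by nlinarith [hs, hs0]
    linarith
  · linear_combination (1/4 : ℝ) * hs

lemma osn_eig_iff {n : ℕ} (A : Matrix (Fin n) (Fin n) ℝ) (z : ℂ) :
    A.IsEigenvalueR z ↔
      (z • (1 : Matrix (Fin n) (Fin n) ℂ) - A.map Complex.ofReal).det = 0 := by
  unfold Matrix.IsEigenvalueR
  rw [Polynomial.IsRoot, Matrix.charpoly, ← Polynomial.coe_evalRingHom, RingHom.map_det]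
  have h : (charmatrix (A.map Complex.ofReal)).map (Polynomial.evalRingHom z)
      = z • (1 : Matrix (Fin n) (Fin n) ℂ) - A.map Complex.ofReal := by
    ext i j
    by_cases hij : i = j
    · subst hij; simp [charmatrix_apply_eq, Matrix.one_apply]
    · simp [charmatrix_apply_ne _ _ _ hij, Matrix.one_apply, hij]
  rw [RingHom.mapMatrix_apply, h]

set_option maxHeartbeats 1000000 in
lemma osn_det7 (z : ℂ) (m00 m01 m10 m12 m22 m33 m34 m43 m44 m55 m56 m65 m66 : ℝ) :
  (z • (1 : Matrix (Fin 7) (Fin 7) ℂ) -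
    (!![m00, m01, 0,0,0,0,0;
        m10, 0, m12, 0,0,0,0;
        0,0, m22, 0,0,0,0;
        0,0,0, m33, m34, 0,0;
        0,0,0, m43, m44, 0,0;
        0,0,0,0,0, m55, m56;
        0,0,0,0,0, m65, m66] : Matrix (Fin 7) (Fin 7) ℝ).map Complex.ofReal).det
   = ((z - m00)*z - m01*m10) * (z - m22)
     * ((z-m33)*(z-m44) - m34*m43) * ((z-m55)*(z-m66) - m56*m65) := by
  have h : z • (1 : Matrix (Fin 7) (Fin 7) ℂ) -
    (!![m00, m01, 0,0,0,0,0;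
        m10, 0, m12, 0,0,0,0;
        0,0, m22, 0,0,0,0;
        0,0,0, m33, m34, 0,0;
        0,0,0, m43, m44, 0,0;
        0,0,0,0,0, m55, m56;
        0,0,0,0,0, m65, m66] : Matrix (Fin 7) (Fin 7) ℝ).map Complex.ofReal
      = reindex finSumFinEquiv finSumFinEquiv
          (fromBlocks
            !![z*1 - (m00:ℂ), z*0 - (m01:ℂ), z*0 - ((0:ℝ):ℂ);
               z*0 - (m10:ℂ), z*1 - ((0:ℝ):ℂ), z*0 - (m12:ℂ);
               z*0 - ((0:ℝ):ℂ), z*0 - ((0:ℝ):ℂ), z*1 - (m22:ℂ)]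
            !![z*0 - ((0:ℝ):ℂ), z*0 - ((0:ℝ):ℂ), z*0 - ((0:ℝ):ℂ), z*0 - ((0:ℝ):ℂ);
               z*0 - ((0:ℝ):ℂ), z*0 - ((0:ℝ):ℂ), z*0 - ((0:ℝ):ℂ), z*0 - ((0:ℝ):ℂ);
               z*0 - ((0:ℝ):ℂ), z*0 - ((0:ℝ):ℂ), z*0 - ((0:ℝ):ℂ), z*0 - ((0:ℝ):ℂ)]
            !![z*0 - ((0:ℝ):ℂ), z*0 - ((0:ℝ):ℂ), z*0 - ((0:ℝ):ℂ);
               z*0 - ((0:ℝ):ℂ), z*0 - ((0:ℝ):ℂ), z*0 - ((0:ℝ):ℂ);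
               z*0 - ((0:ℝ):ℂ), z*0 - ((0:ℝ):ℂ), z*0 - ((0:ℝ):ℂ);
               z*0 - ((0:ℝ):ℂ), z*0 - ((0:ℝ):ℂ), z*0 - ((0:ℝ):ℂ)]
            (reindex finSumFinEquiv finSumFinEquiv
              (fromBlocks
                !![z*1 - (m33:ℂ), z*0 - (m34:ℂ); z*0 - (m43:ℂ), z*1 - (m44:ℂ)]
                !![z*0 - ((0:ℝ):ℂ), z*0 - ((0:ℝ):ℂ); z*0 - ((0:ℝ):ℂ), z*0 - ((0:ℝ):ℂ)]
                !![z*0 - ((0:ℝ):ℂ), z*0 - ((0:ℝ):ℂ); z*0 - ((0:ℝ):ℂ), z*0 - ((0:ℝ):ℂ)]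
                !![z*1 - (m55:ℂ), z*0 - (m56:ℂ); z*0 - (m65:ℂ), z*1 - (m66:ℂ)]))) := by
    ext i j
    fin_cases i <;> fin_cases j <;> rfl
  have hz2 : (!![z*0 - ((0:ℝ):ℂ), z*0 - ((0:ℝ):ℂ); z*0 - ((0:ℝ):ℂ), z*0 - ((0:ℝ):ℂ)])
      = (0 : Matrix (Fin 2) (Fin 2) ℂ) := by
    ext i j; fin_cases i <;> fin_cases j <;> simp [Matrix.vecHead, Matrix.vecTail]
  have hz43 : (!![z*0 - ((0:ℝ):ℂ), z*0 - ((0:ℝ):ℂ), z*0 - ((0:ℝ):ℂ);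
               z*0 - ((0:ℝ):ℂ), z*0 - ((0:ℝ):ℂ), z*0 - ((0:ℝ):ℂ);
               z*0 - ((0:ℝ):ℂ), z*0 - ((0:ℝ):ℂ), z*0 - ((0:ℝ):ℂ);
               z*0 - ((0:ℝ):ℂ), z*0 - ((0:ℝ):ℂ), z*0 - ((0:ℝ):ℂ)])
      = (0 : Matrix (Fin 4) (Fin 3) ℂ) := by
    ext i j; fin_cases i <;> fin_cases j <;> simp [Matrix.vecHead, Matrix.vecTail]
  rw [h, det_reindex_self, hz43, hz2, det_fromBlocks_zero₂₁, det_reindex_self,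
    det_fromBlocks_zero₂₁, det_fin_three, det_fin_two, det_fin_two]
  simp
  ring

set_option maxHeartbeats 2000000 in
lemma osn_jac (Λ μ μn β βw β₁ β₂ γ₁ γ₂ μ₁ μ₂ α₁ α₂ ε₁ ε₂ U : ℝ)
    (hβ : β ≠ 0) (hd1 : α₁ * U + 1 ≠ 0) (hd2 : α₂ * U + 1 ≠ 0) :
    jacobian7 (osnField Λ μ μn β βw β₁ β₂ γ₁ γ₂ μ₁ μ₂ α₁ α₂ ε₁ ε₂)
      ![μn / β, U, 0, 0, 0, 0, 0] =
    !![-μ - β*U, -μn, 0, 0, 0, 0, 0;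
       β*U, 0, -(βw*U), 0, 0, 0, 0;
       0, 0, βw*U - μ, 0, 0, 0, 0;
       0, 0, 0, -γ₁, β₁*U/(α₁*U+1), 0, 0;
       0, 0, 0, γ₁, -μ₁, 0, 0;
       0, 0, 0, 0, 0, -γ₂, β₂*U/(α₂*U+1);
       0, 0, 0, 0, 0, γ₂, -μ₂] := by
  have e0 : (![μn / β, U, 0, 0, 0, 0, 0] : Fin 7 → ℝ) 0 = μn/β := rfl
  have e1 : (![μn / β, U, 0, 0, 0, 0, 0] : Fin 7 → ℝ) 1 = U := rfl
  have e2 : (![μn / β, U, 0, 0, 0, 0, 0] : Fin 7 → ℝ) 2 = 0 := rfl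
  have e3 : (![μn / β, U, 0, 0, 0, 0, 0] : Fin 7 → ℝ) 3 = 0 := rfl
  have e4 : (![μn / β, U, 0, 0, 0, 0, 0] : Fin 7 → ℝ) 4 = 0 := rfl
  have e5 : (![μn / β, U, 0, 0, 0, 0, 0] : Fin 7 → ℝ) 5 = 0 := rfl
  have e6 : (![μn / β, U, 0, 0, 0, 0, 0] : Fin 7 → ℝ) 6 = 0 := rfl
  have h0 := hasFDerivAt_apply (0 : Fin 7) (![μn / β, U, 0, 0, 0, 0, 0]) (𝕜 := ℝ)
  have h1 := hasFDerivAt_apply (1 : Fin 7) (![μn / β, U, 0, 0, 0, 0, 0]) (𝕜 := ℝ)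
  have h2 := hasFDerivAt_apply (2 : Fin 7) (![μn / β, U, 0, 0, 0, 0, 0]) (𝕜 := ℝ)
  have h3 := hasFDerivAt_apply (3 : Fin 7) (![μn / β, U, 0, 0, 0, 0, 0]) (𝕜 := ℝ)
  have h4 := hasFDerivAt_apply (4 : Fin 7) (![μn / β, U, 0, 0, 0, 0, 0]) (𝕜 := ℝ)
  have h5 := hasFDerivAt_apply (5 : Fin 7) (![μn / β, U, 0, 0, 0, 0, 0]) (𝕜 := ℝ)
  have h6 := hasFDerivAt_apply (6 : Fin 7) (![μn / β, U, 0, 0, 0, 0, 0]) (𝕜 := ℝ)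
  ext i j
  fin_cases i
  · -- row 0
    have H := ((hasFDerivAt_const Λ _).sub (h0.const_mul μ)).sub ((h0.const_mul β).mul h1)
    show fderiv ℝ (fun p : Fin 7 → ℝ => Λ - μ * p 0 - β * p 0 * p 1)
      ![μn / β, U, 0, 0, 0, 0, 0] (Pi.single j 1) = _
    rw [HasFDerivAt.fderiv (f := fun p : Fin 7 → ℝ => Λ - μ * p 0 - β * p 0 * p 1) H]
    fin_cases j <;>
      (try simp [Pi.single_apply, Matrix.vecHead, Matrix.vecTail, Function.comp, e0, e1]) <;> (try field_simp) <;> (try ring)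
  · -- row 1
    have H := h1.mul (((h0.const_mul β).sub_const μn).sub (h2.const_mul βw))
    show fderiv ℝ (fun p : Fin 7 → ℝ => p 1 * (β * p 0 - μn - βw * p 2))
      ![μn / β, U, 0, 0, 0, 0, 0] (Pi.single j 1) = _
    rw [HasFDerivAt.fderiv (f := fun p : Fin 7 → ℝ => p 1 * (β * p 0 - μn - βw * p 2)) H]
    fin_cases j <;>
      (try simp [Pi.single_apply, Matrix.vecHead, Matrix.vecTail, Function.comp, e0, e1, e2]) <;> (try field_simp) <;> (try ring)
  · -- row 2
    have H := ((h1.const_mul βw).mul h2).sub (h2.const_mul μ)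
    show fderiv ℝ (fun p : Fin 7 → ℝ => βw * p 1 * p 2 - μ * p 2)
      ![μn / β, U, 0, 0, 0, 0, 0] (Pi.single j 1) = _
    rw [HasFDerivAt.fderiv (f := fun p : Fin 7 → ℝ => βw * p 1 * p 2 - μ * p 2) H]
    fin_cases j <;>
      (try simp [Pi.single_apply, Matrix.vecHead, Matrix.vecTail, Function.comp, e1, e2]) <;> (try field_simp) <;> (try ring)
  · -- row 3
    have hden : ε₁ * (![μn / β, U, 0, 0, 0, 0, 0] : Fin 7 → ℝ) 4
        + α₁ * (![μn / β, U, 0, 0, 0, 0, 0] : Fin 7 → ℝ) 1 + 1 ≠ 0 := by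
      rw [e4, e1]; simpa using hd1
    have H := (((h4.const_mul β₁).mul h1).mul
        ((hasFDerivAt_inv hden).comp (![μn / β, U, 0, 0, 0, 0, 0])
          (((h4.const_mul ε₁).add (h1.const_mul α₁)).add_const 1))).sub
      (h3.const_mul γ₁)
    simp only [Function.comp_def] at H
    have hfun : (fun p : Fin 7 → ℝ =>
          β₁ * p 4 * p 1 / (ε₁ * p 4 + α₁ * p 1 + 1) - γ₁ * p 3)
        = (fun p : Fin 7 → ℝ =>
          (β₁ * p 4 * p 1) * (ε₁ * p 4 + α₁ * p 1 + 1)⁻¹ - γ₁ * p 3) := by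
      funext p; rw [div_eq_mul_inv]
    show fderiv ℝ (fun p : Fin 7 → ℝ =>
        β₁ * p 4 * p 1 / (ε₁ * p 4 + α₁ * p 1 + 1) - γ₁ * p 3)
      ![μn / β, U, 0, 0, 0, 0, 0] (Pi.single j 1) = _
    rw [hfun, HasFDerivAt.fderiv (f := fun p : Fin 7 → ℝ =>
          (β₁ * p 4 * p 1) * (ε₁ * p 4 + α₁ * p 1 + 1)⁻¹ - γ₁ * p 3) H]
    fin_cases j <;>
      (try simp [Pi.single_apply, Matrix.vecHead, Matrix.vecTail, Function.comp, e1, e3, e4]) <;> (try field_simp) <;> (try ring)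
  · -- row 4
    have H := (h3.const_mul γ₁).sub (h4.const_mul μ₁)
    show fderiv ℝ (fun p : Fin 7 → ℝ => γ₁ * p 3 - μ₁ * p 4)
      ![μn / β, U, 0, 0, 0, 0, 0] (Pi.single j 1) = _
    rw [HasFDerivAt.fderiv (f := fun p : Fin 7 → ℝ => γ₁ * p 3 - μ₁ * p 4) H]
    fin_cases j <;>
      (try simp [Pi.single_apply, Matrix.vecHead, Matrix.vecTail, Function.comp]) <;> (try field_simp) <;> (try ring)
  · -- row 5
    have hden : ε₂ * (![μn / β, U, 0, 0, 0, 0, 0] : Fin 7 → ℝ) 6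
        + α₂ * (![μn / β, U, 0, 0, 0, 0, 0] : Fin 7 → ℝ) 1 + 1 ≠ 0 := by
      rw [e6, e1]; simpa using hd2
    have H := (((h6.const_mul β₂).mul h1).mul
        ((hasFDerivAt_inv hden).comp (![μn / β, U, 0, 0, 0, 0, 0])
          (((h6.const_mul ε₂).add (h1.const_mul α₂)).add_const 1))).sub
      (h5.const_mul γ₂)
    simp only [Function.comp_def] at H
    have hfun : (fun p : Fin 7 → ℝ =>
          β₂ * p 6 * p 1 / (ε₂ * p 6 + α₂ * p 1 + 1) - γ₂ * p 5)
        = (fun p : Fin 7 → ℝ =>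
          (β₂ * p 6 * p 1) * (ε₂ * p 6 + α₂ * p 1 + 1)⁻¹ - γ₂ * p 5) := by
      funext p; rw [div_eq_mul_inv]
    show fderiv ℝ (fun p : Fin 7 → ℝ =>
        β₂ * p 6 * p 1 / (ε₂ * p 6 + α₂ * p 1 + 1) - γ₂ * p 5)
      ![μn / β, U, 0, 0, 0, 0, 0] (Pi.single j 1) = _
    rw [hfun, HasFDerivAt.fderiv (f := fun p : Fin 7 → ℝ =>
          (β₂ * p 6 * p 1) * (ε₂ * p 6 + α₂ * p 1 + 1)⁻¹ - γ₂ * p 5) H]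
    fin_cases j <;>
      (try simp [Pi.single_apply, Matrix.vecHead, Matrix.vecTail, Function.comp, e1, e5, e6]) <;> (try field_simp) <;> (try ring)
  · -- row 6
    have H := (h5.const_mul γ₂).sub (h6.const_mul μ₂)
    show fderiv ℝ (fun p : Fin 7 → ℝ => γ₂ * p 5 - μ₂ * p 6)
      ![μn / β, U, 0, 0, 0, 0, 0] (Pi.single j 1) = _
    rw [HasFDerivAt.fderiv (f := fun p : Fin 7 → ℝ => γ₂ * p 5 - μ₂ * p 6) H]
    fin_cases j <;>
      (try simp [Pi.single_apply, Matrix.vecHead, Matrix.vecTail, Function.comp]) <;> (try field_simp) <;> (try ring)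


set_option maxHeartbeats 1000000 in
/-- Stability of the gOSN equilibrium of the ω = 0 OSN system (assuming it exists,
i.e. `R₀ > 1`): the Jacobian at gOSN is Hurwitz iff `R₀ < 1 + β/βw`, `R₁(Û) < 1` and
`R₂(Û) < 1` all hold; if any of the reversed strict inequalities holds, the Jacobian
has an eigenvalue with strictly positive real part. -/
theorem osn_gOSN_stability
    (Λ μ μn β βw β₁ β₂ γ₁ γ₂ μ₁ μ₂ α₁ α₂ ε₁ ε₂ : ℝ)
    (hΛ : 0 < Λ) (hμ : 0 < μ) (hμn : 0 < μn) (hβ : 0 < β) (hβw : 0 < βw)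
    (hβ₁ : 0 < β₁) (hβ₂ : 0 < β₂) (hγ₁ : 0 < γ₁) (hγ₂ : 0 < γ₂)
    (hμ₁ : 0 < μ₁) (hμ₂ : 0 < μ₂) (hα₁ : 0 < α₁) (hα₂ : 0 < α₂)
    (hε₁ : 0 < ε₁) (hε₂ : 0 < ε₂)
    (hR₀ : 1 < β * Λ / (μ * μn)) :
    ((jacobian7 (osnField Λ μ μn β βw β₁ β₂ γ₁ γ₂ μ₁ μ₂ α₁ α₂ ε₁ ε₂)
        ![μn / β, Λ / μn - μ / β, 0, 0, 0, 0, 0]).IsHurwitz ↔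
      (β * Λ / (μ * μn) < 1 + β / βw ∧
       β₁ * (Λ / μn - μ / β) / (μ₁ * (1 + α₁ * (Λ / μn - μ / β))) < 1 ∧
       β₂ * (Λ / μn - μ / β) / (μ₂ * (1 + α₂ * (Λ / μn - μ / β))) < 1)) ∧
    ((1 + β / βw < β * Λ / (μ * μn) ∨
      1 < β₁ * (Λ / μn - μ / β) / (μ₁ * (1 + α₁ * (Λ / μn - μ / β))) ∨
      1 < β₂ * (Λ / μn - μ / β) / (μ₂ * (1 + α₂ * (Λ / μn - μ / β)))) →
      ∃ lam : ℂ,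
        (jacobian7 (osnField Λ μ μn β βw β₁ β₂ γ₁ γ₂ μ₁ μ₂ α₁ α₂ ε₁ ε₂)
          ![μn / β, Λ / μn - μ / β, 0, 0, 0, 0, 0]).IsEigenvalueR lam ∧
        0 < lam.re) := by
  have hμμn : (0:ℝ) < μ * μn := by positivity
  set U : ℝ := Λ / μn - μ / β with hUdef
  have hβΛ : μ * μn < β * Λ := by
    have := (one_lt_div hμμn).mp hR₀
    linarith
  have hUeq : U = (β*Λ - μ*μn)/(μn*β) := by
    rw [hUdef]; field_simp
  have hU : 0 < U := by
    rw [hUeq]; exact div_pos (by linarith) (by positivity)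
  have hd1 : α₁ * U + 1 ≠ 0 := by nlinarith [mul_pos hα₁ hU]
  have hd2 : α₂ * U + 1 ≠ 0 := by nlinarith [mul_pos hα₂ hU]
  have hden1 : (0:ℝ) < α₁ * U + 1 := by nlinarith [mul_pos hα₁ hU]
  have hden2 : (0:ℝ) < α₂ * U + 1 := by nlinarith [mul_pos hα₂ hU]
  have hJ := osn_jac Λ μ μn β βw β₁ β₂ γ₁ γ₂ μ₁ μ₂ α₁ α₂ ε₁ ε₂ U hβ.ne' hd1 hd2
  have hfac1 : ∀ z : ℂ, ((z - ((-μ - β*U : ℝ):ℂ))*z - ((-μn : ℝ):ℂ)*((β*U : ℝ):ℂ))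
      = z^2 + ((μ + β*U : ℝ):ℂ)*z + ((μn*(β*U) : ℝ):ℂ) := by
    intro z; push_cast; ring
  have hfac3 : ∀ z : ℂ,
      ((z - ((-γ₁ : ℝ):ℂ))*(z - ((-μ₁ : ℝ):ℂ)) - ((β₁*U/(α₁*U+1) : ℝ):ℂ)*((γ₁ : ℝ):ℂ))
      = z^2 + ((γ₁ + μ₁ : ℝ):ℂ)*z + ((γ₁*μ₁ - β₁*U/(α₁*U+1)*γ₁ : ℝ):ℂ) := by
    intro z; push_cast; ring
  have hfac4 : ∀ z : ℂ,
      ((z - ((-γ₂ : ℝ):ℂ))*(z - ((-μ₂ : ℝ):ℂ)) - ((β₂*U/(α₂*U+1) : ℝ):ℂ)*((γ₂ : ℝ):ℂ))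
      = z^2 + ((γ₂ + μ₂ : ℝ):ℂ)*z + ((γ₂*μ₂ - β₂*U/(α₂*U+1)*γ₂ : ℝ):ℂ) := by
    intro z; push_cast; ring
  have hroot : ∀ z : ℂ,
      (jacobian7 (osnField Λ μ μn β βw β₁ β₂ γ₁ γ₂ μ₁ μ₂ α₁ α₂ ε₁ ε₂)
        ![μn / β, U, 0, 0, 0, 0, 0]).IsEigenvalueR z ↔
      (z^2 + ((μ + β*U : ℝ):ℂ)*z + ((μn*(β*U) : ℝ):ℂ) = 0 ∨
       z = ((βw*U - μ : ℝ):ℂ) ∨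
       z^2 + ((γ₁ + μ₁ : ℝ):ℂ)*z + ((γ₁*μ₁ - β₁*U/(α₁*U+1)*γ₁ : ℝ):ℂ) = 0 ∨
       z^2 + ((γ₂ + μ₂ : ℝ):ℂ)*z + ((γ₂*μ₂ - β₂*U/(α₂*U+1)*γ₂ : ℝ):ℂ) = 0) := by
    intro z
    rw [hJ, osn_eig_iff, osn_det7, hfac1 z, hfac3 z, hfac4 z]
    simp only [mul_eq_zero, sub_eq_zero]
    tauto
  -- sign facts
  have hbpos : (0:ℝ) < μ + β*U := add_pos hμ (mul_pos hβ hU)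
  have hcpos : (0:ℝ) < μn*(β*U) := mul_pos hμn (mul_pos hβ hU)
  have hp1 : (0:ℝ) < γ₁ + μ₁ := add_pos hγ₁ hμ₁
  have hp2 : (0:ℝ) < γ₂ + μ₂ := add_pos hγ₂ hμ₂
  have ha_neg : βw*U - μ < 0 ↔ β * Λ / (μ * μn) < 1 + β / βw := by
    rw [sub_neg, hUeq, ← mul_div_assoc, div_lt_iff₀ (by positivity),
      show (1:ℝ) + β/βw = (βw+β)/βw by field_simp,
      div_lt_div_iff₀ hμμn hβw]
    constructor <;> intro h <;> nlinarith
  have ha_pos : 0 < βw*U - μ ↔ 1 + β / βw < β * Λ / (μ * μn) := by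
    rw [sub_pos, hUeq, ← mul_div_assoc, lt_div_iff₀ (by positivity),
      show (1:ℝ) + β/βw = (βw+β)/βw by field_simp,
      div_lt_div_iff₀ hβw hμμn]
    constructor <;> intro h <;> nlinarith
  have hq1_pos : 0 < γ₁*μ₁ - β₁*U/(α₁*U+1)*γ₁ ↔ β₁ * U / (μ₁ * (1 + α₁ * U)) < 1 := by
    rw [sub_pos, div_lt_one (by positivity), div_mul_eq_mul_div, div_lt_iff₀ hden1]
    constructor <;> intro h <;> nlinarith
  have hq1_neg : γ₁*μ₁ - β₁*U/(α₁*U+1)*γ₁ < 0 ↔ 1 < β₁ * U / (μ₁ * (1 + α₁ * U)) := by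
    rw [sub_neg, one_lt_div (by positivity), div_mul_eq_mul_div, lt_div_iff₀ hden1]
    constructor <;> intro h <;> nlinarith
  have hq2_pos : 0 < γ₂*μ₂ - β₂*U/(α₂*U+1)*γ₂ ↔ β₂ * U / (μ₂ * (1 + α₂ * U)) < 1 := by
    rw [sub_pos, div_lt_one (by positivity), div_mul_eq_mul_div, div_lt_iff₀ hden2]
    constructor <;> intro h <;> nlinarith
  have hq2_neg : γ₂*μ₂ - β₂*U/(α₂*U+1)*γ₂ < 0 ↔ 1 < β₂ * U / (μ₂ * (1 + α₂ * U)) := by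
    rw [sub_neg, one_lt_div (by positivity), div_mul_eq_mul_div, lt_div_iff₀ hden2]
    constructor <;> intro h <;> nlinarith
  constructor
  · constructor
    · intro hH
      refine ⟨?_, ?_, ?_⟩
      · by_contra hcon
        push_neg at hcon
        have ha : 0 ≤ βw*U - μ := by
          by_contra h'
          push_neg at h'
          exact absurd (ha_neg.mp h') (not_lt.mpr hcon)
        have heig := (hroot ((βw*U - μ : ℝ):ℂ)).mpr (Or.inr (Or.inl rfl))
        have := hH _ heig
        rw [Complex.ofReal_re] at this
        linarith
      · by_contra hcon
        push_neg at hcon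
        have hqle : γ₁*μ₁ - β₁*U/(α₁*U+1)*γ₁ ≤ 0 := by
          by_contra h'
          push_neg at h'
          exact absurd (hq1_pos.mp h') (not_lt.mpr hcon)
        obtain ⟨x, hx0, _, hxeq⟩ := osn_quad_root_nonneg (γ₁+μ₁) _ hqle
        have hc : ((x:ℂ))^2 + ((γ₁ + μ₁ : ℝ):ℂ)*(x:ℂ)
            + ((γ₁*μ₁ - β₁*U/(α₁*U+1)*γ₁ : ℝ):ℂ) = 0 := by exact_mod_cast hxeq
        have heig := (hroot (x:ℂ)).mpr (Or.inr (Or.inr (Or.inl hc)))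
        have := hH _ heig
        rw [Complex.ofReal_re] at this
        linarith
      · by_contra hcon
        push_neg at hcon
        have hqle : γ₂*μ₂ - β₂*U/(α₂*U+1)*γ₂ ≤ 0 := by
          by_contra h'
          push_neg at h'
          exact absurd (hq2_pos.mp h') (not_lt.mpr hcon)
        obtain ⟨x, hx0, _, hxeq⟩ := osn_quad_root_nonneg (γ₂+μ₂) _ hqle
        have hc : ((x:ℂ))^2 + ((γ₂ + μ₂ : ℝ):ℂ)*(x:ℂ)
            + ((γ₂*μ₂ - β₂*U/(α₂*U+1)*γ₂ : ℝ):ℂ) = 0 := by exact_mod_cast hxeq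
        have heig := (hroot (x:ℂ)).mpr (Or.inr (Or.inr (Or.inr hc)))
        have := hH _ heig
        rw [Complex.ofReal_re] at this
        linarith
    · rintro ⟨hc1, hc2, hc3⟩ z hz
      rcases (hroot z).mp hz with h | h | h | h
      · exact osn_quad_root_neg _ _ hbpos hcpos z h
      · rw [h, Complex.ofReal_re]
        exact ha_neg.mpr hc1
      · exact osn_quad_root_neg _ _ hp1 (hq1_pos.mpr hc2) z h
      · exact osn_quad_root_neg _ _ hp2 (hq2_pos.mpr hc3) z h
  · rintro (h | h | h)
    · refine ⟨((βw*U - μ : ℝ):ℂ), (hroot _).mpr (Or.inr (Or.inl rfl)), ?_⟩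
      rw [Complex.ofReal_re]
      exact ha_pos.mpr h
    · have hq : γ₁*μ₁ - β₁*U/(α₁*U+1)*γ₁ < 0 := hq1_neg.mpr h
      obtain ⟨x, _, hxpos, hxeq⟩ := osn_quad_root_nonneg (γ₁+μ₁) _ hq.le
      have hc : ((x:ℂ))^2 + ((γ₁ + μ₁ : ℝ):ℂ)*(x:ℂ)
          + ((γ₁*μ₁ - β₁*U/(α₁*U+1)*γ₁ : ℝ):ℂ) = 0 := by exact_mod_cast hxeq
      refine ⟨(x:ℂ), (hroot _).mpr (Or.inr (Or.inr (Or.inl hc))), ?_⟩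
      rw [Complex.ofReal_re]
      exact hxpos hq
    · have hq : γ₂*μ₂ - β₂*U/(α₂*U+1)*γ₂ < 0 := hq2_neg.mpr h
      obtain ⟨x, _, hxpos, hxeq⟩ := osn_quad_root_nonneg (γ₂+μ₂) _ hq.le
      have hc : ((x:ℂ))^2 + ((γ₂ + μ₂ : ℝ):ℂ)*(x:ℂ)
          + ((γ₂*μ₂ - β₂*U/(α₂*U+1)*γ₂ : ℝ):ℂ) = 0 := by exact_mod_cast hxeq
      refine ⟨(x:ℂ), (hroot _).mpr (Or.inr (Or.inr (Or.inr hc))), ?_⟩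
      rw [Complex.ofReal_re]
      exact hxpos hq

end
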